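/- arXiv:2403.12756 — 2 statements merged into one kernel-verified Lean document; each statement's English description precedes it below -/
import Mathlib

section
/- Let Λ be a finite set, G a transitive subgroup of S(Λ), λ0 ∈ Λ, and N(λ0) = {σ ∈ N_{S(Λ)}(G) | λ0·σ = λ0}. Let Γ be a group and m, m₁ : Γ → G surjective homomorphisms. Then there exists a bijection μ : Λ → Λ with μ(λ0) = λ0 and μ(λ·m(γ)) = μ(λ)·m₁(γ) for all λ ∈ Λ, γ ∈ Γ, if and only if there exists σ ∈ N(λ0) with m₁ = σmσ⁻¹; moreover such a σ ∈ N(λ0), when it exists, is unique. -/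
open Function

theorem Equiv.Perm.semiconj_iff_eq_mul_mul_inv {α : Type*} {μ f g : Equiv.Perm α} :
    Semiconj μ f g ↔ g = μ * f * μ⁻¹ := by
  rw [eq_mul_inv_iff_mul_eq, Equiv.Perm.ext_iff]
  exact forall_congr' fun _ => eq_comm

theorem MonoidHom.mem_range_iff_conj_mem_range {Γ H : Type*} [Group Γ] [Group H]
    {m m₁ : Γ →* H} {μ : H} (hconj : ∀ γ, m₁ γ = μ * m γ * μ⁻¹) (h : H) :
    h ∈ m.range ↔ μ * h * μ⁻¹ ∈ m₁.range := by
  constructor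
  · rintro ⟨γ, rfl⟩
    exact ⟨γ, hconj γ⟩
  · rintro ⟨γ, hγ⟩
    refine ⟨γ, ?_⟩
    rw [hconj γ] at hγ
    exact mul_left_cancel (mul_right_cancel hγ)

theorem Function.Semiconj.eq_of_eq_at_of_transitive {ι α β : Type*} {f : ι → α → α}
    {g : ι → β → β} {μ ν : α → β} {x : α} (htrans : ∀ y, ∃ i, f i x = y)
    (hμ : ∀ i, Semiconj μ (f i) (g i)) (hν : ∀ i, Semiconj ν (f i) (g i)) (hx : μ x = ν x) :
    μ = ν := by
  funext y
  obtain ⟨i, rfl⟩ := htrans y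
  rw [hμ i x, hν i x, hx]

theorem stmt_9_general {Λ : Type*} (G : Subgroup (Equiv.Perm Λ))
    (hG : ∀ a b : Λ, ∃ g ∈ G, g a = b) (l0 : Λ)
    {Γ : Type*} [Group Γ] (m m₁ : Γ →* Equiv.Perm Λ)
    (hm : m.range = G) (hm₁ : m₁.range = G) :
    ((∃ μ : Equiv.Perm Λ, μ l0 = l0 ∧ ∀ (l : Λ) (γ : Γ), μ (m γ l) = m₁ γ (μ l)) ↔
      (∃ σ : Equiv.Perm Λ,
        ((∀ h : Equiv.Perm Λ, h ∈ G ↔ σ * h * σ⁻¹ ∈ G) ∧ σ l0 = l0) ∧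
        ∀ γ : Γ, m₁ γ = σ * m γ * σ⁻¹)) ∧
    (∀ σ τ : Equiv.Perm Λ,
      ((∀ h : Equiv.Perm Λ, h ∈ G ↔ σ * h * σ⁻¹ ∈ G) ∧ σ l0 = l0) →
      ((∀ h : Equiv.Perm Λ, h ∈ G ↔ τ * h * τ⁻¹ ∈ G) ∧ τ l0 = l0) →
      (∀ γ : Γ, m₁ γ = σ * m γ * σ⁻¹) → (∀ γ : Γ, m₁ γ = τ * m γ * τ⁻¹) →
      σ = τ) := by
  refine ⟨⟨?_, ?_⟩, ?_⟩
  · rintro ⟨μ, hμ0, hμ⟩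
    have hconj : ∀ γ, m₁ γ = μ * m γ * μ⁻¹ :=
      fun γ => Equiv.Perm.semiconj_iff_eq_mul_mul_inv.1 (hμ · γ)
    refine ⟨μ, ⟨fun h => ?_, hμ0⟩, hconj⟩
    simpa only [hm, hm₁] using MonoidHom.mem_range_iff_conj_mem_range hconj h
  · rintro ⟨σ, ⟨-, hσ0⟩, hconj⟩
    exact ⟨σ, hσ0, fun l γ => Equiv.Perm.semiconj_iff_eq_mul_mul_inv.2 (hconj γ) l⟩
  · rintro σ τ ⟨-, hσ0⟩ ⟨-, hτ0⟩ hσ hτ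
    have htrans : ∀ y, ∃ γ, m γ l0 = y := fun y => by
      obtain ⟨g, hg, rfl⟩ := hG l0 y
      obtain ⟨γ, rfl⟩ := hm ▸ hg
      exact ⟨γ, rfl⟩
    refine DFunLike.coe_injective (Semiconj.eq_of_eq_at_of_transitive htrans
      (fun γ => Equiv.Perm.semiconj_iff_eq_mul_mul_inv.2 (hσ γ))
      (fun γ => Equiv.Perm.semiconj_iff_eq_mul_mul_inv.2 (hτ γ)) ?_)
    rw [hσ0, hτ0]

/-- Pointed version: a bijection `μ` fixing `l0` and intertwining the `Γ`-actions
given by the surjections `m, m₁ : Γ → G` exists iff `m₁ = σ m σ⁻¹` for some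
`σ ∈ N(λ0)` (`σ` normalizes `G` and fixes `l0`); such a `σ` is unique. -/
theorem stmt_9 {Λ : Type*} [Fintype Λ] (G : Subgroup (Equiv.Perm Λ))
    (hG : ∀ a b : Λ, ∃ g ∈ G, g a = b) (l0 : Λ)
    {Γ : Type*} [Group Γ] (m m₁ : Γ →* Equiv.Perm Λ)
    (hm : m.range = G) (hm₁ : m₁.range = G) :
    ((∃ μ : Equiv.Perm Λ, μ l0 = l0 ∧ ∀ (l : Λ) (γ : Γ), μ (m γ l) = m₁ γ (μ l)) ↔
      (∃ σ : Equiv.Perm Λ,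
        ((∀ h : Equiv.Perm Λ, h ∈ G ↔ σ * h * σ⁻¹ ∈ G) ∧ σ l0 = l0) ∧
        ∀ γ : Γ, m₁ γ = σ * m γ * σ⁻¹)) ∧
    (∀ σ τ : Equiv.Perm Λ,
      ((∀ h : Equiv.Perm Λ, h ∈ G ↔ σ * h * σ⁻¹ ∈ G) ∧ σ l0 = l0) →
      ((∀ h : Equiv.Perm Λ, h ∈ G ↔ τ * h * τ⁻¹ ∈ G) ∧ τ l0 = l0) →
      (∀ γ : Γ, m₁ γ = σ * m γ * σ⁻¹) → (∀ γ : Γ, m₁ γ = τ * m γ * τ⁻¹) →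
      σ = τ) :=
  stmt_9_general G hG l0 m m₁ hm hm₁
end

section
/- Let Λ be a finite set, G a transitive subgroup of S(Λ), λ0 ∈ Λ, and N(λ0) = {σ ∈ N_{S(Λ)}(G) | λ0·σ = λ0}. Let Γ be a group and m : Γ → G a surjective homomorphism. Then the orbit {σmσ⁻¹ | σ ∈ N(λ0)} of m under conjugation by N(λ0) has cardinality exactly |N(λ0)|. -/
/-- The orbit of a surjection `m : Γ → G` under conjugation by
`N(λ0) = {σ ∈ N_{S(Λ)}(G) | σ l0 = l0}` has cardinality `|N(λ0)|`. -/
theorem stmt_13 {Λ : Type*} [Fintype Λ] (G : Subgroup (Equiv.Perm Λ))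
    (hG : ∀ a b : Λ, ∃ g ∈ G, g a = b) (l0 : Λ)
    {Γ : Type*} [Group Γ] (m : Γ →* Equiv.Perm Λ) (hm : m.range = G) :
    Nat.card {m' : Γ →* Equiv.Perm Λ |
        ∃ σ : Equiv.Perm Λ,
          ((∀ h : Equiv.Perm Λ, h ∈ G ↔ σ * h * σ⁻¹ ∈ G) ∧ σ l0 = l0) ∧
          ∀ γ : Γ, m' γ = σ * m γ * σ⁻¹}
      = Nat.card {σ : Equiv.Perm Λ |
          (∀ h : Equiv.Perm Λ, h ∈ G ↔ σ * h * σ⁻¹ ∈ G) ∧ σ l0 = l0} := by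
  set S := {σ : Equiv.Perm Λ |
      (∀ h : Equiv.Perm Λ, h ∈ G ↔ σ * h * σ⁻¹ ∈ G) ∧ σ l0 = l0} with hS
  set T := {m' : Γ →* Equiv.Perm Λ |
      ∃ σ : Equiv.Perm Λ,
        ((∀ h : Equiv.Perm Λ, h ∈ G ↔ σ * h * σ⁻¹ ∈ G) ∧ σ l0 = l0) ∧
        ∀ γ : Γ, m' γ = σ * m γ * σ⁻¹} with hT
  have hfun : ∀ σ : S, (((MulAut.conj (σ : Equiv.Perm Λ)).toMonoidHom.comp m : Γ →* Equiv.Perm Λ)) ∈ T := by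
    rintro ⟨σ, hσ⟩
    exact ⟨σ, hσ, fun γ => rfl⟩
  let e : S → T := fun σ => ⟨_, hfun σ⟩
  have hbij : Function.Bijective e := by
    constructor
    · rintro ⟨σ₁, h₁, hl₁⟩ ⟨σ₂, h₂, hl₂⟩ h
      have h' : ∀ γ : Γ, σ₁ * m γ * σ₁⁻¹ = σ₂ * m γ * σ₂⁻¹ := by
        intro γ
        have := congrArg (fun f : T => (f : Γ →* Equiv.Perm Λ) γ) h
        simpa [e] using this
      -- τ := σ₂⁻¹ * σ₁ commutes with all of G and fixes l0, hence is 1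
      set τ := σ₂⁻¹ * σ₁ with hτ
      have hcomm : ∀ g ∈ G, τ * g = g * τ := by
        intro g hg
        rw [← hm] at hg
        obtain ⟨γ, rfl⟩ := hg
        calc σ₂⁻¹ * σ₁ * m γ = σ₂⁻¹ * (σ₁ * m γ * σ₁⁻¹) * σ₁ := by group
        _ = σ₂⁻¹ * (σ₂ * m γ * σ₂⁻¹) * σ₁ := by rw [h' γ]
        _ = m γ * (σ₂⁻¹ * σ₁) := by group
      have hτl0 : τ l0 = l0 := by
        have : σ₂⁻¹ l0 = l0 := by
          conv_lhs => rw [← hl₂]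
          simp
        simp [hτ, Equiv.Perm.mul_apply, hl₁, this]
      have hτ1 : τ = 1 := by
        ext a
        obtain ⟨g, hg, hga⟩ := hG l0 a
        have : τ (g l0) = g (τ l0) := by
          have := hcomm g hg
          calc τ (g l0) = (τ * g) l0 := rfl
          _ = (g * τ) l0 := by rw [this]
          _ = g (τ l0) := rfl
        simp only [hga] at this
        simp [this, hτl0, hga]
      have : σ₁ = σ₂ := by
        have h1 := hτ1
        rw [hτ] at h1
        calc σ₁ = σ₂ * (σ₂⁻¹ * σ₁) := by group
        _ = σ₂ := by rw [h1]; group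
      exact Subtype.ext this
    · rintro ⟨m', σ, hσ, hconj⟩
      refine ⟨⟨σ, hσ⟩, ?_⟩
      apply Subtype.ext
      ext γ
      simp [e, (hconj γ).symm]
  exact (Nat.card_congr (Equiv.ofBijective e hbij)).symm
end
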